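/- arXiv:2410.20476 — 3 statements merged into one kernel-verified Lean document; each statement's English description precedes it below -/
import Mathlib

section
/- Let F be a CDF on [0,1] with density f, median θ_μ > 1/2, satisfying ∫₀^{1-θ_μ}(1 - F(θ_μ+t) - F(θ_μ-t))dt ≤ 0. Then the function G(θ_s) := ∫_{θ_s}^1 -(v - θ_s)² f(v) dv + (θ_μ - θ_s)² is nonincreasing in θ_s on [0, 2θ_μ - 1]. -/
open MeasureTheory intervalIntegral Set
open scoped Interval

/-! Expanding the square and differentiating under the moving lower limit gives
`G'(s) = 2 ∫_s^1 (v - s) f(v) dv - 2 (θμ - s)`, and integration by parts against `F`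
turns this into `G'(s) = 2 (1 - θμ - ∫_s^1 F)`. Splitting `∫_s^1 F` at `2θμ - 1`, the piece
over `[s, 2θμ - 1]` is nonnegative because `F ≥ F 0 = 0`, while the skewness condition,
after the substitutions `v = θμ ± t`, says exactly that `∫_{2θμ-1}^1 F ≥ 1 - θμ`. -/

section LowerLimit

variable {f : ℝ → ℝ} (hf : Continuous f) (b : ℝ)
include hf

theorem hasDerivAt_integral_of_continuous_left (s : ℝ) :
    HasDerivAt (fun u => ∫ v in u..b, f v) (-f s) s :=
  integral_hasDerivAt_left (hf.intervalIntegrable _ _) (hf.stronglyMeasurableAtFilter _ _)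
    hf.continuousAt

theorem integral_sub_mul_eq (s : ℝ) :
    ∫ v in s..b, (v - s) * f v = (∫ v in s..b, v * f v) - s * ∫ v in s..b, f v := by
  simp_rw [sub_mul]
  rw [intervalIntegral.integral_sub, intervalIntegral.integral_const_mul]
  all_goals exact Continuous.intervalIntegrable (by fun_prop) _ _

theorem integral_sq_sub_mul_eq (s : ℝ) :
    ∫ v in s..b, (v - s) ^ 2 * f v
      = (∫ v in s..b, v ^ 2 * f v) - 2 * s * (∫ v in s..b, v * f v)
        + s ^ 2 * ∫ v in s..b, f v := by
  have hexpand : ∀ v, (v - s) ^ 2 * f v = v ^ 2 * f v - 2 * s * (v * f v) + s ^ 2 * f v :=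
    fun v => by ring
  simp_rw [hexpand]
  rw [intervalIntegral.integral_add, intervalIntegral.integral_sub,
    intervalIntegral.integral_const_mul, intervalIntegral.integral_const_mul]
  all_goals exact Continuous.intervalIntegrable (by fun_prop) _ _

theorem hasDerivAt_integral_sq_sub_mul (s : ℝ) :
    HasDerivAt (fun u => ∫ v in u..b, (v - u) ^ 2 * f v)
      (-(2 * ∫ v in s..b, (v - s) * f v)) s := by
  rw [funext (integral_sq_sub_mul_eq hf b), integral_sub_mul_eq hf b]
  have h2 := hasDerivAt_integral_of_continuous_left
    (by fun_prop : Continuous fun v => v ^ 2 * f v) b s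
  have h1 := hasDerivAt_integral_of_continuous_left
    (by fun_prop : Continuous fun v => v * f v) b s
  have h0 := hasDerivAt_integral_of_continuous_left hf b s
  refine ((h2.sub (((hasDerivAt_id' s).const_mul 2).mul h1)).add
    ((hasDerivAt_pow 2 s).mul h0)).congr_deriv ?_
  norm_num
  ring

end LowerLimit

theorem integral_sub_mul_deriv_eq {F f : ℝ → ℝ} {s b : ℝ}
    (hF : ∀ x ∈ [[s, b]], HasDerivAt F (f x) x) (hf : IntervalIntegrable f volume s b) :
    ∫ v in s..b, (v - s) * f v = (b - s) * F b - ∫ v in s..b, F v := by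
  rw [integral_mul_deriv_eq_deriv_mul (fun x _ => (hasDerivAt_id' x).sub_const s) hF
    intervalIntegrable_const hf]
  simp

theorem integral_one_sub_add_sub_eq {F : ℝ → ℝ} (hF : Continuous F) (θ c : ℝ) :
    ∫ t in (0:ℝ)..c, (1 - F (θ + t) - F (θ - t)) = c - ∫ v in θ - c..θ + c, F v := by
  rw [intervalIntegral.integral_sub, intervalIntegral.integral_sub,
    integral_comp_add_left, integral_comp_sub_left, add_zero, sub_zero,
    ← integral_add_adjacent_intervals (hF.intervalIntegrable (θ - c) θ)
      (hF.intervalIntegrable θ (θ + c))]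
  · simp only [intervalIntegral.integral_const, sub_zero, smul_eq_mul, mul_one]
    ring
  all_goals exact Continuous.intervalIntegrable (by fun_prop) _ _

theorem G_antitone_general
    (F f : ℝ → ℝ) (θμ : ℝ)
    (hF : ∀ x, HasDerivAt F (f x) x)
    (hf : Continuous f)
    (hfpos : ∀ x ∈ Set.Icc (0:ℝ) 1, 0 < f x)
    (hF0 : F 0 = 0) (hF1 : F 1 = 1)
    (hθμ1 : θμ ≤ 1)
    (hskew : (∫ t in (0:ℝ)..(1 - θμ), (1 - F (θμ + t) - F (θμ - t))) ≤ 0) :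
    AntitoneOn (fun θs => (∫ v in θs..1, -(v - θs)^2 * f v) + (θμ - θs)^2)
      (Set.Icc (0:ℝ) (2*θμ - 1)) := by
  have hFc : Continuous F := continuous_iff_continuousAt.mpr fun x => (hF x).continuousAt
  have hFmono : MonotoneOn F (Icc 0 1) :=
    monotoneOn_of_hasDerivWithinAt_nonneg (convex_Icc 0 1) hFc.continuousOn
      (fun x _ => (hF x).hasDerivWithinAt) fun x hx => (hfpos x (interior_subset hx)).le
  have hFnonneg : ∀ u ∈ Icc (0:ℝ) 1, 0 ≤ F u :=
    fun u hu => hF0 ▸ hFmono (left_mem_Icc.mpr zero_le_one) hu hu.1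
  have hG' : ∀ s, HasDerivAt (fun θs => (∫ v in θs..1, -(v - θs)^2 * f v) + (θμ - θs)^2)
      (2 * (1 - θμ - ∫ v in s..1, F v)) s := by
    intro s
    simp_rw [neg_mul, intervalIntegral.integral_neg]
    refine ((hasDerivAt_integral_sq_sub_mul hf 1 s).neg.add
      ((hasDerivAt_id' s).const_sub θμ |>.pow 2)).congr_deriv ?_
    rw [integral_sub_mul_deriv_eq (fun x _ => hF x) (hf.intervalIntegrable _ _), hF1]
    ring
  have hmass : 1 - θμ ≤ ∫ v in 2 * θμ - 1..1, F v := by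
    rw [integral_one_sub_add_sub_eq hFc, show θμ - (1 - θμ) = 2 * θμ - 1 by ring,
      add_sub_cancel] at hskew
    linarith
  refine antitoneOn_of_hasDerivWithinAt_nonpos (convex_Icc _ _)
    (HasDerivAt.continuousOn fun x _ => hG' x) (fun x _ => (hG' x).hasDerivWithinAt) ?_
  intro s hs
  rw [interior_Icc] at hs
  have hrest : 0 ≤ ∫ v in s..2 * θμ - 1, F v :=
    integral_nonneg hs.2.le fun u hu =>
      hFnonneg u ⟨hs.1.le.trans hu.1, hu.2.trans (by linarith)⟩
  rw [← integral_add_adjacent_intervals (hFc.intervalIntegrable s (2 * θμ - 1))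
    (hFc.intervalIntegrable _ 1)]
  linarith

/-- For a CDF `F` on `[0,1]` with density `f`, median `θμ > 1/2`,
and skewness condition, `G(θs) = ∫_{θs}^1 -(v - θs)² f(v) dv + (θμ - θs)²`
is nonincreasing in `θs` on `[0, 2θμ - 1]`. -/
theorem G_antitone
    (F f : ℝ → ℝ) (θμ : ℝ)
    (hF : ∀ x, HasDerivAt F (f x) x)
    (hf : Continuous f)
    (hfpos : ∀ x ∈ Set.Icc (0:ℝ) 1, 0 < f x)
    (hF0 : F 0 = 0) (hF1 : F 1 = 1)
    (hmed : F θμ = 1/2) (hθμ : 1/2 < θμ) (hθμ1 : θμ ≤ 1)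
    (hskew : (∫ t in (0:ℝ)..(1 - θμ), (1 - F (θμ + t) - F (θμ - t))) ≤ 0) :
    AntitoneOn (fun θs => (∫ v in θs..1, -(v - θs)^2 * f v) + (θμ - θs)^2)
      (Set.Icc (0:ℝ) (2*θμ - 1)) :=
  G_antitone_general F f θμ hF hf hfpos hF0 hF1 hθμ1 hskew
end

section
/- Let F be a CDF on [0,1] with density f and median θ_μ ≤ 1/2 satisfying ∫₀^{θ_μ}(1 - F(θ_μ+t) - F(θ_μ-t))dt ≥ 0. Then the function K(θ_s) := ∫₀^{θ_s} -(v - θ_s)² f(v) dv + (θ_μ - θ_s)² is nondecreasing in θ_s on [2θ_μ, 1]. -/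
open MeasureTheory intervalIntegral Set

/-!
Two integrations by parts (a Cauchy repeated-integral formula) give
`K θ = (θμ - θ)² - 2 ∫₀^θ G` with `G u = ∫₀^u F`, so `K' θ = 2 (θ - θμ - G θ)`.
This is nondecreasing on `[0, 1]`, its derivative being `2 (1 - F) ≥ 0` (`F ≤ F 1 = 1`
there since `f > 0`), and at `θ = 2θμ` it equals `2 (θμ - G (2θμ))`, which is twice the
skewness integral.
-/

lemma monotoneOn_Icc_of_hasDerivAt_nonneg {g g' : ℝ → ℝ} {a b : ℝ}
    (hg : ∀ x, HasDerivAt g (g' x) x) (hg' : ∀ x ∈ Ioo a b, 0 ≤ g' x) :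
    MonotoneOn g (Icc a b) :=
  monotoneOn_of_hasDerivWithinAt_nonneg (convex_Icc a b)
    (fun x _ ↦ (hg x).continuousAt.continuousWithinAt)
    (fun x _ ↦ (hg x).hasDerivWithinAt)
    (fun x hx ↦ hg' x (by rwa [interior_Icc] at hx))

lemma integral_sub_pow_succ_mul_deriv {g g' : ℝ → ℝ} (n : ℕ) (θ : ℝ)
    (hg : ∀ x ∈ uIcc 0 θ, HasDerivAt g (g' x) x) (hg' : IntervalIntegrable g' volume 0 θ)
    (hg0 : g 0 = 0) :
    ∫ v in (0:ℝ)..θ, (θ - v) ^ (n + 1) * g' v = (n + 1) * ∫ v in (0:ℝ)..θ, (θ - v) ^ n * g v := by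
  have hu : ∀ x ∈ uIcc 0 θ,
      HasDerivAt (fun v ↦ (θ - v) ^ (n + 1)) (-((n + 1) * (θ - x) ^ n)) x := fun x _ ↦
    (((hasDerivAt_id' x).const_sub θ).fun_pow (n + 1)).congr_deriv (by push_cast; ring)
  have hu' : IntervalIntegrable (fun x ↦ -((n + 1 : ℝ) * (θ - x) ^ n)) volume 0 θ :=
    (by fun_prop : Continuous fun x : ℝ ↦ -((n + 1 : ℝ) * (θ - x) ^ n)).intervalIntegrable _ _
  rw [integral_mul_deriv_eq_deriv_mul hu hg hu' hg', hg0]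
  simp [mul_assoc]

lemma integral_neg_sub_sq_mul_deriv {F f : ℝ → ℝ} (hF : ∀ x, HasDerivAt F (f x) x)
    (hf : Continuous f) (hF0 : F 0 = 0) (θ : ℝ) :
    ∫ v in (0:ℝ)..θ, -(v - θ) ^ 2 * f v = -2 * ∫ u in (0:ℝ)..θ, ∫ t in (0:ℝ)..u, F t := by
  have hFc : Continuous F := continuous_iff_continuousAt.2 fun x ↦ (hF x).continuousAt
  have hG : ∀ x ∈ uIcc 0 θ, HasDerivAt (fun u ↦ ∫ t in (0:ℝ)..u, F t) (F x) x := fun x _ ↦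
    hFc.integral_hasStrictDerivAt 0 x |>.hasDerivAt
  have h2 := integral_sub_pow_succ_mul_deriv 1 θ (fun x _ ↦ hF x) (hf.intervalIntegrable _ _) hF0
  have h1 := integral_sub_pow_succ_mul_deriv 0 θ hG (hFc.intervalIntegrable _ _)
    intervalIntegral.integral_same
  simp only [zero_add, pow_one, pow_zero, one_mul, Nat.cast_zero, Nat.cast_one] at h1 h2
  calc ∫ v in (0:ℝ)..θ, -(v - θ) ^ 2 * f v
      = -∫ v in (0:ℝ)..θ, (θ - v) ^ 2 * f v := by
        rw [← intervalIntegral.integral_neg]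
        exact intervalIntegral.integral_congr fun v _ ↦ by ring
    _ = -2 * ∫ u in (0:ℝ)..θ, ∫ t in (0:ℝ)..u, F t := by rw [h2, h1]; norm_num

lemma integral_one_sub_symmetric_eq {F : ℝ → ℝ} (hF : Continuous F) (a : ℝ) :
    ∫ t in (0:ℝ)..a, (1 - F (a + t) - F (a - t)) = a - ∫ x in (0:ℝ)..2 * a, F x := by
  have hplus : IntervalIntegrable (fun t ↦ F (a + t)) volume 0 a :=
    (hF.comp (continuous_const_add a)).intervalIntegrable _ _
  have hminus : IntervalIntegrable (fun t ↦ F (a - t)) volume 0 a :=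
    (hF.comp (continuous_sub_left a)).intervalIntegrable _ _
  rw [intervalIntegral.integral_sub (intervalIntegrable_const.sub hplus) hminus,
    intervalIntegral.integral_sub intervalIntegrable_const hplus,
    intervalIntegral.integral_comp_add_left F a, intervalIntegral.integral_comp_sub_left F a,
    ← intervalIntegral.integral_add_adjacent_intervals (hF.intervalIntegrable 0 a)
      (hF.intervalIntegrable a (2 * a))]
  norm_num [two_mul]
  ring

theorem K_monotone_general
    (F f : ℝ → ℝ) (θμ : ℝ)
    (hF : ∀ x, HasDerivAt F (f x) x)
    (hf : Continuous f)
    (hfpos : ∀ x ∈ Set.Icc (0:ℝ) 1, 0 < f x)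
    (hF0 : F 0 = 0) (hF1 : F 1 = 1)
    (hθμ0 : 0 ≤ θμ)
    (hskew : 0 ≤ ∫ t in (0:ℝ)..θμ, (1 - F (θμ + t) - F (θμ - t))) :
    MonotoneOn (fun θs => (∫ v in (0:ℝ)..θs, -(v - θs)^2 * f v) + (θμ - θs)^2)
      (Set.Icc (2*θμ) 1) := by
  have hFc : Continuous F := continuous_iff_continuousAt.2 fun x ↦ (hF x).continuousAt
  set G : ℝ → ℝ := fun u ↦ ∫ t in (0:ℝ)..u, F t
  have hG : ∀ x, HasDerivAt G (F x) x := fun x ↦ (hFc.integral_hasStrictDerivAt 0 x).hasDerivAt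
  have hGc : Continuous G := continuous_iff_continuousAt.2 fun x ↦ (hG x).continuousAt
  have hK : ∀ θ, HasDerivAt (fun θs ↦ (∫ v in (0:ℝ)..θs, -(v - θs)^2 * f v) + (θμ - θs)^2)
      (2 * (θ - θμ - G θ)) θ := fun θ ↦ by
    simp_rw [integral_neg_sub_sq_mul_deriv hF hf hF0]
    exact (((hGc.integral_hasStrictDerivAt 0 θ).hasDerivAt.const_mul (-2)).add
      (((hasDerivAt_id' θ).const_sub θμ).fun_pow 2)).congr_deriv (by push_cast; ring)
  have hF_le_one : ∀ x ∈ Icc (0:ℝ) 1, F x ≤ 1 := fun x hx ↦ hF1 ▸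
    monotoneOn_Icc_of_hasDerivAt_nonneg hF (fun y hy ↦ (hfpos y (Ioo_subset_Icc_self hy)).le)
      hx (right_mem_Icc.2 zero_le_one) hx.2
  have hφ : MonotoneOn (fun θ ↦ θ - θμ - G θ) (Icc 0 1) :=
    monotoneOn_Icc_of_hasDerivAt_nonneg (fun x ↦ ((hasDerivAt_id' x).sub_const θμ).sub (hG x))
      (fun x hx ↦ sub_nonneg.2 (hF_le_one x (Ioo_subset_Icc_self hx)))
  have hφ_start : 0 ≤ 2 * θμ - θμ - G (2 * θμ) := by
    rw [integral_one_sub_symmetric_eq hFc] at hskew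
    linarith
  refine monotoneOn_Icc_of_hasDerivAt_nonneg hK fun x hx ↦ ?_
  have hφx := hφ ⟨by linarith, by linarith [hx.1, hx.2]⟩ ⟨by linarith [hx.1], hx.2.le⟩ hx.1.le
  dsimp only at hφx
  linarith

/-- For a CDF `F` on `[0,1]` with density `f`, median `θμ ≤ 1/2`,
and skewness condition, `K(θs) = ∫₀^{θs} -(v - θs)² f(v) dv + (θμ - θs)²`
is nondecreasing in `θs` on `[2θμ, 1]`. -/
theorem K_monotone
    (F f : ℝ → ℝ) (θμ : ℝ)
    (hF : ∀ x, HasDerivAt F (f x) x)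
    (hf : Continuous f)
    (hfpos : ∀ x ∈ Set.Icc (0:ℝ) 1, 0 < f x)
    (hF0 : F 0 = 0) (hF1 : F 1 = 1)
    (hmed : F θμ = 1/2) (hθμ0 : 0 ≤ θμ) (hθμ : θμ ≤ 1/2)
    (hskew : 0 ≤ ∫ t in (0:ℝ)..θμ, (1 - F (θμ + t) - F (θμ - t))) :
    MonotoneOn (fun θs => (∫ v in (0:ℝ)..θs, -(v - θs)^2 * f v) + (θμ - θs)^2)
      (Set.Icc (2*θμ) 1) :=
  K_monotone_general F f θμ hF hf hfpos hF0 hF1 hθμ0 hskew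
end

section
/- Let F be a CDF on [0,1] with density f, median θ_μ > 1/2 and skewness condition ∫₀^{1-θ_μ}(1 - F(θ_μ+t) - F(θ_μ-t))dt ≤ 0, and let θ̲ ∈ (0, 2θ_μ−1) satisfy ∫_{θ̲}^1 -(v−θ̲)² f(v) dv = -(θ_μ−θ̲)². Then for all θ_s ∈ [0, θ̲] and all w ∈ [θ_s, θ̲]: -(w−θ_s)² F(w) + ∫_w^1 -(v−θ_s)² f(v) dv ≥ -(θ_μ−θ_s)². -/
set_option maxHeartbeats 1000000


open MeasureTheory intervalIntegral Set

/-- Lemma 2 of the paper: For a CDF `F` on `[0,1]` with density `f`,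
median `θμ > 1/2`, skewness condition, and lower threshold `θlb ∈ (0, 2θμ-1)` with
`∫_{θlb}^1 -(v-θlb)² f(v) dv = -(θμ-θlb)²`, every type `θs ∈ [0, θlb]` weakly
prefers any winner `w ∈ [θs, θlb]` of round `T-1` to the median:
`-(w-θs)² F(w) + ∫_w^1 -(v-θs)² f(v) dv ≥ -(θμ-θs)²`. -/
theorem tail_types_prefer_tail_winner
    (F f : ℝ → ℝ) (θμ θlb : ℝ)
    (hF : ∀ x, HasDerivAt F (f x) x)
    (hf : Continuous f)
    (hfpos : ∀ x ∈ Set.Icc (0:ℝ) 1, 0 < f x)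
    (hF0 : F 0 = 0) (hF1 : F 1 = 1)
    (hmed : F θμ = 1/2) (hθμ : 1/2 < θμ) (hθμ1 : θμ ≤ 1)
    (hskew : (∫ t in (0:ℝ)..(1 - θμ), (1 - F (θμ + t) - F (θμ - t))) ≤ 0)
    (hθlb : θlb ∈ Set.Ioo (0:ℝ) (2*θμ - 1))
    (hroot : (∫ v in θlb..1, -(v - θlb)^2 * f v) = -(θμ - θlb)^2) :
    ∀ θs ∈ Set.Icc (0:ℝ) θlb, ∀ w ∈ Set.Icc θs θlb,
      -(θμ - θs)^2 ≤ -(w - θs)^2 * F w + ∫ v in w..1, -(v - θs)^2 * f v := by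
  intro θs hθs w hw
  obtain ⟨hθs0, hθsl⟩ := hθs
  obtain ⟨hws, hwl⟩ := hw
  obtain ⟨hlb0, hlb1⟩ := hθlb
  have hθlb1 : θlb ≤ 1 := by linarith
  have h2θμ1 : 2*θμ - 1 ≤ 1 := by linarith
  have hFc : Continuous F := continuous_iff_continuousAt.mpr fun x => (hF x).continuousAt
  -- fundamental theorem of calculus
  have hFTC : ∀ a b : ℝ, (∫ x in a..b, f x) = F b - F a := fun a b =>
    intervalIntegral.integral_eq_sub_of_hasDerivAt (fun x _ => hF x)
      (hf.intervalIntegrable a b)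
  -- F is monotone and nonneg on [0,1]
  have hFmono : ∀ a b : ℝ, 0 ≤ a → a ≤ b → b ≤ 1 → F a ≤ F b := by
    intro a b ha hab hb1
    have h := hFTC a b
    have hnn : 0 ≤ ∫ x in a..b, f x := by
      apply intervalIntegral.integral_nonneg hab
      intro x hx
      exact (hfpos x ⟨le_trans ha hx.1, le_trans hx.2 hb1⟩).le
    linarith
  have hFnn : ∀ x : ℝ, 0 ≤ x → x ≤ 1 → 0 ≤ F x := by
    intro x hx hx1
    have := hFmono 0 x le_rfl hx hx1
    linarith [hF0 ▸ this]
  -- Skewness condition rewritten: ∫_{2θμ-1}^1 F ≥ 1 - θμ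
  have hskew' : 1 - θμ ≤ ∫ v in (2*θμ-1)..1, F v := by
    have h1 : (∫ t in (0:ℝ)..(1-θμ), F (θμ + t)) = ∫ u in θμ..1, F u := by
      rw [intervalIntegral.integral_comp_add_left F θμ]
      norm_num
    have h2 : (∫ t in (0:ℝ)..(1-θμ), F (θμ - t)) = ∫ u in (2*θμ-1)..θμ, F u := by
      rw [intervalIntegral.integral_comp_sub_left F θμ]
      ring_nf
    have hsplit : (∫ t in (0:ℝ)..(1-θμ), (1 - F (θμ + t) - F (θμ - t)))
        = (1 - θμ) - (∫ t in (0:ℝ)..(1-θμ), F (θμ + t))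
          - (∫ t in (0:ℝ)..(1-θμ), F (θμ - t)) := by
      rw [intervalIntegral.integral_sub, intervalIntegral.integral_sub]
      · simp
      · exact intervalIntegrable_const
      · exact (hFc.comp (continuous_const.add continuous_id)).intervalIntegrable _ _
      · exact (intervalIntegrable_const.sub
          ((hFc.comp (continuous_const.add continuous_id)).intervalIntegrable _ _))
      · exact (hFc.comp (continuous_const.sub continuous_id)).intervalIntegrable _ _
    have hadj : (∫ u in (2*θμ-1)..θμ, F u) + (∫ u in θμ..1, F u)
        = ∫ u in (2*θμ-1)..1, F u :=
      intervalIntegral.integral_add_adjacent_intervals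
        (hFc.intervalIntegrable _ _) (hFc.intervalIntegrable _ _)
    rw [hsplit, h1, h2] at hskew
    linarith
  -- hence ∫_{θlb}^1 F ≥ 1 - θμ
  have hK : 1 - θμ ≤ ∫ v in θlb..1, F v := by
    have hadj : (∫ v in θlb..(2*θμ-1), F v) + (∫ v in (2*θμ-1)..1, F v)
        = ∫ v in θlb..1, F v :=
      intervalIntegral.integral_add_adjacent_intervals
        (hFc.intervalIntegrable _ _) (hFc.intervalIntegrable _ _)
    have hnn : 0 ≤ ∫ v in θlb..(2*θμ-1), F v := by
      apply intervalIntegral.integral_nonneg (by linarith)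
      intro x hx
      exact hFnn x (le_trans hlb0.le hx.1) (le_trans hx.2 h2θμ1)
    linarith
  -- integration by parts: ∫_{θlb}^1 (v-θlb) f v = (1-θlb) - ∫_{θlb}^1 F
  have hIBP : (∫ v in θlb..1, (v - θlb) * f v) = (1 - θlb) - ∫ v in θlb..1, F v := by
    have h := intervalIntegral.integral_mul_deriv_eq_deriv_mul
      (u := fun v => v - θlb) (u' := fun _ => (1:ℝ)) (v := F) (v' := f)
      (a := θlb) (b := 1)
      (fun x _ => (hasDerivAt_id x).sub_const θlb)
      (fun x _ => hF x)
      (intervalIntegrable_const) (hf.intervalIntegrable _ _)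
    simp only [one_mul, sub_self, zero_mul, sub_zero] at h
    rw [h, hF1]
    ring
  -- ∫_{θlb}^1 f
  have hC : (∫ v in θlb..1, f v) = 1 - F θlb := by rw [hFTC]; rw [hF1]
  -- expand the tail integral for type θs
  have hI : (∫ v in θlb..1, -(v - θs)^2 * f v)
      = (∫ v in θlb..1, -(v - θlb)^2 * f v)
        + (-2*(θlb - θs)) * (∫ v in θlb..1, (v - θlb) * f v)
        + (-(θlb - θs)^2) * (∫ v in θlb..1, f v) := by
    have i1 : IntervalIntegrable (fun v => -(v - θlb)^2 * f v) volume θlb 1 :=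
      (Continuous.intervalIntegrable (by fun_prop) _ _)
    have i2 : IntervalIntegrable (fun v => (-2*(θlb - θs)) * ((v - θlb) * f v)) volume θlb 1 :=
      (Continuous.intervalIntegrable (by fun_prop) _ _)
    have i3 : IntervalIntegrable (fun v => (-(θlb - θs)^2) * f v) volume θlb 1 :=
      (Continuous.intervalIntegrable (by fun_prop) _ _)
    have hcong : (∫ v in θlb..1, -(v - θs)^2 * f v)
        = ∫ v in θlb..1, (-(v - θlb)^2 * f v + (-2*(θlb - θs)) * ((v - θlb) * f v)
            + (-(θlb - θs)^2) * f v) := by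
      apply intervalIntegral.integral_congr
      intro v _
      ring
    rw [hcong, intervalIntegral.integral_add (i1.add i2) i3,
      intervalIntegral.integral_add i1 i2,
      intervalIntegral.integral_const_mul, intervalIntegral.integral_const_mul]
  -- split ∫_w^1 into ∫_w^θlb + ∫_θlb^1
  have hadjw : (∫ v in w..θlb, -(v - θs)^2 * f v) + (∫ v in θlb..1, -(v - θs)^2 * f v)
      = ∫ v in w..1, -(v - θs)^2 * f v :=
    intervalIntegral.integral_add_adjacent_intervals
      (Continuous.intervalIntegrable (by fun_prop : Continuous fun v => -(v - θs)^2 * f v) _ _)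
      (Continuous.intervalIntegrable (by fun_prop : Continuous fun v => -(v - θs)^2 * f v) _ _)
  -- lower bound on ∫_w^θlb
  have hmid : -(θlb - θs)^2 * (F θlb - F w) ≤ ∫ v in w..θlb, -(v - θs)^2 * f v := by
    have h1 : (∫ v in w..θlb, -(θlb - θs)^2 * f v) = -(θlb - θs)^2 * (F θlb - F w) := by
      rw [intervalIntegral.integral_const_mul, hFTC]
    rw [← h1]
    apply intervalIntegral.integral_mono_on hwl
      (Continuous.intervalIntegrable (by fun_prop : Continuous fun v => -(θlb - θs)^2 * f v) _ _)
      (Continuous.intervalIntegrable (by fun_prop : Continuous fun v => -(v - θs)^2 * f v) _ _)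
    intro v hv
    have hfv : 0 ≤ f v := (hfpos v ⟨le_trans hθs0 (le_trans hws hv.1), le_trans hv.2 hθlb1⟩).le
    have hsq : (v - θs)^2 ≤ (θlb - θs)^2 := by nlinarith [hv.1, hv.2, hws]
    nlinarith
  -- assemble
  have hFwnn : 0 ≤ F w := hFnn w (le_trans hθs0 hws) (le_trans hwl hθlb1)
  have hsqw : (w - θs)^2 ≤ (θlb - θs)^2 := by nlinarith
  rw [← hadjw]
  rw [hI, hroot, hIBP, hC]
  nlinarith [mul_nonneg hFwnn (sub_nonneg.mpr hsqw),
    mul_nonneg (sub_nonneg.mpr hθsl) (by linarith : (0:ℝ) ≤ θμ - 1 + ∫ v in θlb..1, F v),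
    hmid]
end
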